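/- Among all Euclidean triangles of unit area, the equilateral triangle maximizes the length of the shortest height. -/

import Mathlib

/-!
Heron's formula reads `16 S² = 2xy + 2yz + 2zx - x² - y² - z²` in the squared side lengths
`x, y, z`. If all three are at most the squared longest side `M`, the right-hand side is at most
`3 M²`, with equality only when `x = y = z = M`. For `S = 1` the longest side `m` therefore
satisfies `3 m⁴ ≥ 16`, i.e. the shortest height `2 / m` is at most `3 ^ (1/4)`, with equality
exactly for the equilateral triangle.
-/

open MeasureTheory Set Pointwise

lemma volume_triangle_prod :
    volume {p : ℝ × ℝ | 0 ≤ p.1 ∧ 0 ≤ p.2 ∧ p.1 + p.2 ≤ 1} = ENNReal.ofReal (1 / 2) := by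
  have hslice (x : ℝ) : volume (Prod.mk x ⁻¹' {p : ℝ × ℝ | 0 ≤ p.1 ∧ 0 ≤ p.2 ∧ p.1 + p.2 ≤ 1})
      = (Icc 0 1).indicator (fun x => ENNReal.ofReal (1 - x)) x := by
    by_cases hx : 0 ≤ x
    · have : Prod.mk x ⁻¹' {p : ℝ × ℝ | 0 ≤ p.1 ∧ 0 ≤ p.2 ∧ p.1 + p.2 ≤ 1} = Icc 0 (1 - x) := by
        ext y
        simp only [mem_preimage, mem_ofPred_eq, mem_Icc]
        constructor
        · rintro ⟨-, h0, h1⟩; exact ⟨h0, by linarith⟩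
        · rintro ⟨h0, h1⟩; exact ⟨hx, h0, by linarith⟩
      rw [this, Real.volume_Icc, sub_zero, indicator_apply]
      split_ifs with h1
      · rfl
      · exact ENNReal.ofReal_of_nonpos (by grind)
    · have : Prod.mk x ⁻¹' {p : ℝ × ℝ | 0 ≤ p.1 ∧ 0 ≤ p.2 ∧ p.1 + p.2 ≤ 1} = ∅ := by
        ext y; simp [hx]
      simp [this, hx]
  rw [Measure.volume_eq_prod, Measure.prod_apply (by measurability)]
  simp_rw [hslice]
  rw [lintegral_indicator measurableSet_Icc, ← ofReal_integral_eq_lintegral_ofReal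
    (by fun_prop : Continuous fun x : ℝ => 1 - x).integrableOn_Icc
    ((ae_restrict_iff' measurableSet_Icc).2 (.of_forall fun x hx => sub_nonneg.2 hx.2)),
    integral_Icc_eq_integral_Ioc, ← intervalIntegral.integral_of_le zero_le_one,
    intervalIntegral.integral_sub intervalIntegrable_const intervalIntegral.intervalIntegrable_id]
  norm_num

namespace EuclideanSpace

def stdTriangle : Set (EuclideanSpace ℝ (Fin 2)) := {x | 0 ≤ x 0 ∧ 0 ≤ x 1 ∧ x 0 + x 1 ≤ 1}

lemma volume_stdTriangle : volume stdTriangle = ENNReal.ofReal (1 / 2) := by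
  have hf := (volume_preserving_finTwoArrow ℝ).comp (PiLp.volume_preserving_ofLp (Fin 2))
  rw [← volume_triangle_prod, ← hf.measure_preimage (by measurability)]
  rfl

lemma convexHull_zero_single_single :
    convexHull ℝ {0, single 0 1, single 1 1} = stdTriangle := by
  apply Subset.antisymm
  · refine convexHull_min ?_ ?_
    · rintro x (rfl | rfl | rfl) <;> simp [stdTriangle]
    · rintro x ⟨hx0, hx1, hx⟩ y ⟨hy0, hy1, hy⟩ s t hs ht hst
      simp only [stdTriangle, mem_ofPred_eq, PiLp.add_apply, PiLp.smul_apply, smul_eq_mul]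
      refine ⟨by positivity, by positivity, by nlinarith⟩
  · rintro x ⟨hx0, hx1, hx⟩
    refine mem_convexHull_of_exists_fintype ![1 - x 0 - x 1, x 0, x 1] ![0, single 0 1, single 1 1]
      (fun i => by fin_cases i <;> dsimp <;> linarith) (by simp [Fin.sum_univ_three]; ring)
      (fun i => by fin_cases i <;> simp) ?_
    ext i
    fin_cases i <;> simp [Fin.sum_univ_three]

lemma volume_convexHull_triangle (A B C : EuclideanSpace ℝ (Fin 2)) :
    volume (convexHull ℝ {A, B, C}) =
      ENNReal.ofReal (|(B 0 - A 0) * (C 1 - A 1) - (C 0 - A 0) * (B 1 - A 1)| / 2) := by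
  set L : EuclideanSpace ℝ (Fin 2) →L[ℝ] EuclideanSpace ℝ (Fin 2) :=
    (proj 0).smulRight (B - A) + (proj 1).smulRight (C - A)
  have hdet : LinearMap.det (L : EuclideanSpace ℝ (Fin 2) →ₗ[ℝ] EuclideanSpace ℝ (Fin 2)) =
      (B 0 - A 0) * (C 1 - A 1) - (C 0 - A 0) * (B 1 - A 1) := by
    rw [← LinearMap.det_toMatrix (basisFun (Fin 2) ℝ).toBasis, Matrix.det_fin_two]
    simp [L, LinearMap.toMatrix_apply]
  have hhull : convexHull ℝ {A, B, C} = A +ᵥ L '' stdTriangle := by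
    rw [← convexHull_zero_single_single, ← L.coe_coe, LinearMap.image_convexHull, ← convexHull_vadd]
    congr 1
    simp [L, image_insert_eq, vadd_set_insert]
  rw [hhull, measure_vadd, Measure.addHaar_image_continuousLinearMap, hdet, volume_stdTriangle,
    ← ENNReal.ofReal_mul (abs_nonneg _)]
  ring_nf

lemma dist_sq_fin_two (X Y : EuclideanSpace ℝ (Fin 2)) :
    dist X Y ^ 2 = (X 0 - Y 0) ^ 2 + (X 1 - Y 1) ^ 2 := by
  rw [EuclideanSpace.dist_eq, Real.sq_sqrt (by positivity)]
  simp [Fin.sum_univ_two, Real.dist_eq, sq_abs]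

lemma heron_volume_convexHull (A B C : EuclideanSpace ℝ (Fin 2)) :
    2 * dist B C ^ 2 * dist A C ^ 2 + 2 * dist A C ^ 2 * dist A B ^ 2
      + 2 * dist A B ^ 2 * dist B C ^ 2 - dist B C ^ 4 - dist A C ^ 4 - dist A B ^ 4 =
      16 * (volume (convexHull ℝ {A, B, C})).toReal ^ 2 := by
  have h4 (X Y : EuclideanSpace ℝ (Fin 2)) : dist X Y ^ 4 = (dist X Y ^ 2) ^ 2 := by ring
  rw [volume_convexHull_triangle, ENNReal.toReal_ofReal (by positivity), div_pow, sq_abs]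
  simp only [h4, dist_sq_fin_two]
  ring

end EuclideanSpace

lemma heron_le_three_mul_sq {x y z N : ℝ} (hx : 0 ≤ x) (hy : 0 ≤ y) (hz : 0 ≤ z)
    (hxN : x ≤ N) (hyN : y ≤ N) (hzN : z ≤ N) :
    2 * x * y + 2 * y * z + 2 * z * x - x ^ 2 - y ^ 2 - z ^ 2 ≤ 3 * N ^ 2 := by
  nlinarith [mul_nonneg (sub_nonneg.2 hxN) hx, mul_nonneg (sub_nonneg.2 hyN) hy,
    mul_nonneg (sub_nonneg.2 hzN) hz]

lemma eq_of_heron_eq_three_mul_sq {x y z N : ℝ} (hx : 0 ≤ x) (hy : 0 ≤ y) (hz : 0 ≤ z)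
    (hxN : x ≤ N) (hyN : y ≤ N) (hzN : z ≤ N)
    (h : 2 * x * y + 2 * y * z + 2 * z * x - x ^ 2 - y ^ 2 - z ^ 2 = 3 * N ^ 2) :
    x = N ∧ y = N ∧ z = N := by
  refine ⟨le_antisymm hxN ?_, le_antisymm hyN ?_, le_antisymm hzN ?_⟩ <;>
    nlinarith [sq_nonneg (x - y), sq_nonneg (y - z), sq_nonneg (x - z),
      mul_nonneg (sub_nonneg.2 hxN) hx, mul_nonneg (sub_nonneg.2 hyN) hy,
      mul_nonneg (sub_nonneg.2 hzN) hz]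

lemma min_div_div_left {a b c : ℝ} (hc : 0 ≤ c) (ha : 0 < a) (hb : 0 < b) :
    min (c / a) (c / b) = c / max a b := by
  rcases le_total a b with h | h
  · rw [max_eq_right h, min_eq_right (div_le_div_of_nonneg_left hc ha h)]
  · rw [max_eq_left h, min_eq_left (div_le_div_of_nonneg_left hc hb h)]

lemma rpow_one_div_four_pow_four {x : ℝ} (hx : 0 ≤ x) : (x ^ ((1 : ℝ) / 4)) ^ 4 = x := by
  rw [one_div, ← Real.rpow_natCast, ← Real.rpow_mul hx]; norm_num

lemma two_div_le_three_rpow_iff {m : ℝ} (hm : 0 < m) :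
    2 / m ≤ (3 : ℝ) ^ ((1 : ℝ) / 4) ↔ 16 ≤ 3 * m ^ 4 := by
  rw [← pow_le_pow_iff_left₀ (by positivity) (by positivity) four_ne_zero,
    rpow_one_div_four_pow_four zero_le_three, div_pow, div_le_iff₀ (by positivity)]
  norm_num

lemma two_div_eq_three_rpow_iff {m : ℝ} (hm : 0 < m) :
    2 / m = (3 : ℝ) ^ ((1 : ℝ) / 4) ↔ 3 * m ^ 4 = 16 := by
  rw [← pow_left_inj₀ (by positivity) (by positivity) four_ne_zero,
    rpow_one_div_four_pow_four zero_le_three, div_pow, div_eq_iff (by positivity)]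
  norm_num
  exact eq_comm

lemma min_two_div_of_heron {a b c : ℝ} (ha : 0 ≤ a) (hb : 0 ≤ b) (hc : 0 ≤ c)
    (heron : 2 * a ^ 2 * b ^ 2 + 2 * b ^ 2 * c ^ 2 + 2 * c ^ 2 * a ^ 2 - a ^ 4 - b ^ 4 - c ^ 4 = 16) :
    min (2 / a) (min (2 / b) (2 / c)) ≤ (3 : ℝ) ^ ((1 : ℝ) / 4) ∧
      (min (2 / a) (min (2 / b) (2 / c)) = (3 : ℝ) ^ ((1 : ℝ) / 4) ↔ c = a ∧ a = b) := by
  have ha' : 0 < a := ha.lt_of_ne' fun h => by subst h; nlinarith [sq_nonneg (b ^ 2 - c ^ 2)]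
  have hb' : 0 < b := hb.lt_of_ne' fun h => by subst h; nlinarith [sq_nonneg (a ^ 2 - c ^ 2)]
  have hc' : 0 < c := hc.lt_of_ne' fun h => by subst h; nlinarith [sq_nonneg (a ^ 2 - b ^ 2)]
  rw [min_div_div_left zero_le_two hb' hc', min_div_div_left zero_le_two ha' (by positivity)]
  set m := max a (max b c)
  have hm : 0 < m := by positivity
  rw [two_div_le_three_rpow_iff hm, two_div_eq_three_rpow_iff hm]
  have ham : a ^ 2 ≤ m ^ 2 := pow_le_pow_left₀ ha (by simp [m]) 2
  have hbm : b ^ 2 ≤ m ^ 2 := pow_le_pow_left₀ hb (by simp [m]) 2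
  have hcm : c ^ 2 ≤ m ^ 2 := pow_le_pow_left₀ hc (by simp [m]) 2
  have key := heron_le_three_mul_sq (sq_nonneg a) (sq_nonneg b) (sq_nonneg c) ham hbm hcm
  refine ⟨by nlinarith, fun h => ?_, ?_⟩
  · obtain ⟨hx, hy, hz⟩ := eq_of_heron_eq_three_mul_sq (sq_nonneg a) (sq_nonneg b) (sq_nonneg c)
      ham hbm hcm (by nlinarith)
    rw [← hx, pow_left_inj₀ hc ha two_ne_zero] at hz
    rw [← hy, pow_left_inj₀ ha hb two_ne_zero] at hx
    exact ⟨hz, hx⟩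
  · rintro ⟨rfl, rfl⟩
    simp only [m, max_self]
    linarith

theorem stmt_12_general (A B C : EuclideanSpace ℝ (Fin 2))
    (harea : (volume (convexHull ℝ ({A, B, C} : Set (EuclideanSpace ℝ (Fin 2))))).toReal = 1) :
    min (2 / dist B C) (min (2 / dist A C) (2 / dist A B)) ≤ (3 : ℝ) ^ ((1 : ℝ) / 4) ∧
    (min (2 / dist B C) (min (2 / dist A C) (2 / dist A B)) = (3 : ℝ) ^ ((1 : ℝ) / 4) ↔
      dist A B = dist B C ∧ dist B C = dist A C) := by
  refine min_two_div_of_heron dist_nonneg dist_nonneg dist_nonneg ?_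
  rw [EuclideanSpace.heron_volume_convexHull, harea]
  norm_num

/-- Among Euclidean triangles of unit area, the equilateral triangle maximizes the
shortest height: every unit-area triangle has shortest height at most `3^(1/4)`, with
equality if and only if the triangle is equilateral. (For a unit-area triangle the height
on the side of length `s` is `2/s`.) -/
theorem stmt_12 (A B C : EuclideanSpace ℝ (Fin 2))
    (hind : AffineIndependent ℝ ![A, B, C])
    (harea : (volume (convexHull ℝ ({A, B, C} : Set (EuclideanSpace ℝ (Fin 2))))).toReal = 1) :
    min (2 / dist B C) (min (2 / dist A C) (2 / dist A B)) ≤ (3 : ℝ) ^ ((1 : ℝ) / 4) ∧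
    (min (2 / dist B C) (min (2 / dist A C) (2 / dist A B)) = (3 : ℝ) ^ ((1 : ℝ) / 4) ↔
      dist A B = dist B C ∧ dist B C = dist A C) :=
  stmt_12_general A B C harea
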